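/- arXiv:2504.21451 — 5 statements merged into one kernel-verified Lean document; each statement's English description precedes it below -/
import Mathlib

section
/- Let m be a positive integer and let a, b, n', n'' be nonnegative integers with n'' < 2^b, and set n = 2^{a+b+1}·n' + n''. Then B(m, n) ≡ B(m, 2^a·n') · B(m, n'') (mod 2^{a+2}). -/
/-- `s2 x` is the binary digit sum of `x`: the number of `1`s in its binary expansion. -/
def s2 (x : ℕ) : ℕ := (Nat.digits 2 x).sum

/-- `B m n` is the number of balanced colourings of the `2m × 2n` grid:
colourings of the cells in black (`false`) and white (`true`) such that every row
(of `2m` cells) has exactly `m` white cells and every column (of `2n` cells) has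
exactly `n` white cells.  Here `f i j` is the colour of the cell in column `i`, row `j`. -/
noncomputable def B (m n : ℕ) : ℕ :=
  Nat.card {f : Fin (2 * m) → Fin (2 * n) → Bool //
    (∀ j, (Finset.univ.filter fun i => f i j = true).card = m) ∧
    (∀ i, (Finset.univ.filter fun j => f i j = true).card = n)}

set_option linter.unusedSectionVars false

def good (m : ℕ) {T : Type} [Fintype T] (n : ℕ) (f : Fin (2 * m) → T → Bool) : Prop :=
  (∀ j, (Finset.univ.filter fun i => f i j = true).card = m) ∧
  (∀ i, (Finset.univ.filter fun j => f i j = true).card = n)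

open MulAction in
lemma dvd_card_of_no_fixed {G X : Type} [CommGroup G] [Fintype G] [Fintype X] [MulAction G X]
    (K k : ℕ) (hG : Fintype.card G = 2 ^ K) (g₀ : G) (hg : ∃ h : G, h ^ 2 ^ k = g₀)
    (hfree : ∀ x : X, ¬ g₀ • x = x) : 2 ^ (k + 1) ∣ Fintype.card X := by
  classical
  obtain ⟨h, rfl⟩ := hg
  have : Fintype (orbitRel.Quotient G X) := Fintype.ofFinite _
  have : ∀ b : X, Fintype (stabilizer G b) := fun b => Fintype.ofFinite _
  rw [card_eq_sum_card_group_div_card_stabilizer G X]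
  apply Finset.dvd_sum
  intro ω _
  set H := stabilizer G ω.out with hH
  haveI : H.Normal := H.normal_of_comm
  have hdvd : Nat.card H ∣ 2 ^ K := by
    rw [← hG, ← Nat.card_eq_fintype_card]; exact Subgroup.card_subgroup_dvd_card H
  obtain ⟨j, hj, hcard⟩ := (Nat.dvd_prime_pow Nat.prime_two).mp hdvd
  have hmul : H.index * Nat.card H = Nat.card G := H.index_mul_card
  have hNG : Nat.card G = 2 ^ K := by rw [Nat.card_eq_fintype_card, hG]
  have hmul2 : H.index * 2 ^ j = 2 ^ K := by rw [← hcard, hmul, hNG]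
  have hindex : H.index = 2 ^ (K - j) := by
    have h2 : (2:ℕ) ^ (K - j) * 2 ^ j = 2 ^ K := by
      rw [← pow_add]; congr 1; omega
    have : 0 < 2 ^ j := Nat.pow_pos (by norm_num)
    exact Nat.eq_of_mul_eq_mul_right this (by rw [hmul2, h2])
  have hgoal : Fintype.card G / Fintype.card (stabilizer G ω.out) = H.index := by
    rw [← Nat.card_eq_fintype_card, ← Nat.card_eq_fintype_card, ← hH, ← hmul,
      Nat.mul_div_cancel _ Nat.card_pos]
  rw [hgoal, hindex]
  by_contra hcon
  -- then K - j ≤ k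
  have hKjk : K - j ≤ k := by
    by_contra hle
    exact hcon (pow_dvd_pow 2 (by omega))
  have hmem : h ^ 2 ^ k ∈ H := by
    have : h ^ 2 ^ k = (h ^ H.index) ^ 2 ^ (k - (K - j)) := by
      have he : K - j + (k - (K - j)) = k := by omega
      rw [← pow_mul, hindex, ← pow_add, he]
    rw [this]
    exact pow_mem (H.pow_index_mem h) _
  exact hfree ω.out hmem

open MulAction in
lemma card_modEq_card_fixed {G X : Type} [CommGroup G] [Fintype G] [Fintype X] [MulAction G X]
    (K k : ℕ) (hG : Fintype.card G = 2 ^ K) (g₀ : G) (hg : ∃ h : G, h ^ 2 ^ k = g₀) :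
    Nat.card X ≡ Nat.card {x : X // g₀ • x = x} [MOD 2 ^ (k + 1)] := by
  classical
  have hcomm : ∀ (g : G) (x : X), g₀ • g • x = g • g₀ • x := by
    intro g x
    rw [← mul_smul, ← mul_smul, mul_comm]
  let p : SubMulAction G X :=
    { carrier := {x | ¬ g₀ • x = x}
      smul_mem' := by
        intro g x hx hgx
        apply hx
        have : g₀ • g • x = g • x := hgx
        rw [hcomm] at this
        exact MulAction.injective g this }
  have hsplit : Nat.card {x : X // g₀ • x = x} + Nat.card {x : X // ¬ g₀ • x = x}
      = Nat.card X := by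
    rw [Nat.card_eq_fintype_card, Nat.card_eq_fintype_card, Nat.card_eq_fintype_card,
      Fintype.card_subtype_compl]
    have hle : Fintype.card { x : X // g₀ • x = x } ≤ Fintype.card X :=
      Fintype.card_subtype_le _
    omega
  have hdvd : 2 ^ (k + 1) ∣ Nat.card {x : X // ¬ g₀ • x = x} := by
    have he : Nat.card {x : X // ¬ g₀ • x = x} = Fintype.card p := by
      rw [Nat.card_eq_fintype_card]
      exact Fintype.card_congr (Equiv.refl _)
    rw [he]
    refine dvd_card_of_no_fixed K k hG g₀ hg ?_
    rintro ⟨x, hx⟩ hfix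
    exact hx (congrArg Subtype.val hfix)
  calc Nat.card X = Nat.card {x : X // g₀ • x = x}
        + Nat.card {x : X // ¬ g₀ • x = x} := hsplit.symm
    _ ≡ Nat.card {x : X // g₀ • x = x} + 0 [MOD 2 ^ (k+1)] :=
        Nat.ModEq.add_left _ ((Nat.modEq_zero_iff_dvd).mpr hdvd)
    _ = Nat.card {x : X // g₀ • x = x} := by ring

lemma B_eq (m n : ℕ) : B m n = Nat.card {f : Fin (2*m) → Fin (2*n) → Bool // good m n f} := rfl

/-- Reindexing the "rows" by an equivalence gives an equivalence of balanced colourings. -/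
def goodEquiv (m n : ℕ) {T T' : Type} [Fintype T] [Fintype T'] (e : T ≃ T') :
    {f : Fin (2*m) → T → Bool // good m n f} ≃ {f : Fin (2*m) → T' → Bool // good m n f} where
  toFun f := ⟨fun i j' => f.1 i (e.symm j'), by
    obtain ⟨hr, hc⟩ := f.2
    constructor
    · intro j'; exact hr (e.symm j')
    · intro i
      refine Eq.trans ?_ (hc i)
      apply Finset.card_nbij' (fun j' => e.symm j') (fun j => e j) <;>
        simp [Finset.mem_filter, Set.MapsTo, Set.LeftInvOn, Set.RightInvOn]⟩
  invFun f := ⟨fun i j => f.1 i (e j), by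
    obtain ⟨hr, hc⟩ := f.2
    constructor
    · intro j; exact hr (e j)
    · intro i
      refine Eq.trans ?_ (hc i)
      apply Finset.card_nbij' (fun j => e j) (fun j' => e.symm j') <;>
        simp [Finset.mem_filter, Set.MapsTo, Set.LeftInvOn, Set.RightInvOn]⟩
  left_inv f := by ext i j; simp
  right_inv f := by ext i j'; simp

lemma card_good_eq_B (m n : ℕ) {T : Type} [Fintype T] (hT : Fintype.card T = 2 * n) :
    Nat.card {f : Fin (2*m) → T → Bool // good m n f} = B m n := by
  classical
  have e : T ≃ Fin (2*n) := Fintype.equivFinOfCardEq hT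
  rw [B_eq]
  exact Nat.card_congr (goodEquiv m n e)

section shift

variable {N c d : ℕ} [NeZero N]

def shiftT (g : ZMod N) : (Fin c × ZMod N) ⊕ Fin d → (Fin c × ZMod N) ⊕ Fin d
  | Sum.inl p => Sum.inl (p.1, g + p.2)
  | Sum.inr w => Sum.inr w

@[simp] lemma shiftT_inl (g : ZMod N) (p : Fin c × ZMod N) :
    shiftT (d := d) g (Sum.inl p) = Sum.inl (p.1, g + p.2) := rfl

@[simp] lemma shiftT_inr (g : ZMod N) (w : Fin d) :
    shiftT (c := c) g (Sum.inr w) = Sum.inr w := rfl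

lemma shiftT_zero : shiftT (c := c) (d := d) (0 : ZMod N) = id := by
  funext j
  cases j with
  | inl p => simp
  | inr w => simp

lemma shiftT_shiftT (g g' : ZMod N) (j : (Fin c × ZMod N) ⊕ Fin d) :
    shiftT g (shiftT g' j) = shiftT (g + g') j := by
  cases j with
  | inl p => simp [add_assoc]
  | inr w => simp

/-- `shiftT` as an equivalence. -/
def shiftTEquiv (g : ZMod N) : ((Fin c × ZMod N) ⊕ Fin d) ≃ ((Fin c × ZMod N) ⊕ Fin d) where
  toFun := shiftT g
  invFun := shiftT (-g)
  left_inv j := by rw [shiftT_shiftT]; simp [shiftT_zero]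
  right_inv j := by rw [shiftT_shiftT]; simp [shiftT_zero]

lemma good_shift {m n : ℕ} (g : ZMod N) (f : Fin (2*m) → ((Fin c × ZMod N) ⊕ Fin d) → Bool)
    (hf : good m n f) : good m n (fun i j => f i (shiftT g j)) := by
  obtain ⟨hr, hc⟩ := hf
  constructor
  · intro j; exact hr (shiftT g j)
  · intro i
    refine Eq.trans ?_ (hc i)
    apply Finset.card_nbij' (fun j => shiftT g j) (fun j => shiftT (-g) j) <;>
      simp [Finset.mem_filter, shiftT_shiftT, shiftT_zero, Set.MapsTo, Set.LeftInvOn, Set.RightInvOn]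

instance goodMulAction {m n : ℕ} :
    MulAction (Multiplicative (ZMod N))
      {f : Fin (2*m) → ((Fin c × ZMod N) ⊕ Fin d) → Bool // good m n f} where
  smul g f := ⟨fun i j => f.1 i (shiftT g.toAdd j), good_shift g.toAdd f.1 f.2⟩
  one_smul f := by
    apply Subtype.ext
    funext i j
    show f.1 i (shiftT (0 : ZMod N) j) = f.1 i j
    rw [shiftT_zero]; rfl
  mul_smul g g' f := by
    apply Subtype.ext
    funext i j
    show f.1 i (shiftT (g.toAdd + g'.toAdd) j) = f.1 i (shiftT g'.toAdd (shiftT g.toAdd j))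
    rw [shiftT_shiftT, add_comm]

lemma smul_good_def {m n : ℕ} (g : Multiplicative (ZMod N))
    (f : {f : Fin (2*m) → ((Fin c × ZMod N) ⊕ Fin d) → Bool // good m n f}) :
    (g • f).1 = fun i j => f.1 i (shiftT g.toAdd j) := rfl

end shift

section cpr

variable {N M : ℕ} [NeZero N] [NeZero M]

/-- Compression map `ZMod N → ZMod M`. -/
def cpr (M : ℕ) (v : ZMod N) : ZMod M := ((v.val : ℕ) : ZMod M)

lemma cpr_natCast (hMN : M ∣ N) (x : ℕ) : cpr M ((x : ℕ) : ZMod N) = (x : ZMod M) := by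
  unfold cpr
  rw [ZMod.val_natCast]
  exact (ZMod.natCast_eq_natCast_iff _ _ _).mpr (Nat.mod_mod_of_dvd x hMN)

lemma cpr_val (hMN : M ∣ N) (w : ZMod M) : cpr M ((w.val : ℕ) : ZMod N) = w := by
  rw [cpr_natCast hMN, ZMod.natCast_rightInverse w]

lemma cpr_eq_iff (v v' : ZMod N) : cpr M v = cpr M v' ↔ v.val % M = v'.val % M := by
  unfold cpr
  rw [ZMod.natCast_eq_natCast_iff]
  rfl

variable {c d m n : ℕ}

lemma period_eq (f : Fin (2*m) → ((Fin c × ZMod N) ⊕ Fin d) → Bool)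
    (hfix : ∀ i j, f i (shiftT ((M : ℕ) : ZMod N) j) = f i j)
    (i : Fin (2*m)) (u : Fin c) (v v' : ZMod N) (hvv : cpr M v = cpr M v') :
    f i (Sum.inl (u, v)) = f i (Sum.inl (u, v')) := by
  have sub : ∀ (t : ℕ) (w : ZMod N),
      f i (Sum.inl (u, ((t * M : ℕ) : ZMod N) + w)) = f i (Sum.inl (u, w)) := by
    intro t
    induction t with
    | zero => intro w; norm_num
    | succ t ih =>
      intro w
      have : (((t+1) * M : ℕ) : ZMod N) + w = ((M:ℕ) : ZMod N) + (((t * M : ℕ) : ZMod N) + w) := by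
        push_cast
        ring
      rw [this]
      have := hfix i (Sum.inl (u, ((t * M : ℕ) : ZMod N) + w))
      rw [shiftT_inl] at this
      rw [this, ih]
  have key : ∀ w : ZMod N, f i (Sum.inl (u, w)) = f i (Sum.inl (u, ((w.val % M : ℕ) : ZMod N))) := by
    intro w
    have hw : w = ((w.val / M * M : ℕ) : ZMod N) + ((w.val % M : ℕ) : ZMod N) := by
      rw [← Nat.cast_add]
      rw [show w.val / M * M + w.val % M = w.val from by
        rw [Nat.mul_comm]; exact Nat.div_add_mod w.val M]
      exact (ZMod.natCast_rightInverse w).symm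
    conv_lhs => rw [hw]
    exact sub _ _
  rw [key v, key v', (cpr_eq_iff v v').mp hvv]

end cpr

lemma card_fiber {Nn M D : ℕ} [NeZero Nn] [NeZero M] (h : Nn = D * M) (w : ZMod M) :
    (Finset.univ.filter fun v : ZMod Nn => ((v.val : ℕ) : ZMod M) = w).card = D := by
  have hM : 0 < M := Nat.pos_of_ne_zero (NeZero.ne M)
  have hwv : w.val < M := ZMod.val_lt w
  have hcond : ∀ v : ZMod Nn, (((v.val : ℕ) : ZMod M) = w ↔ v.val % M = w.val) := by
    intro v
    constructor
    · intro hv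
      have := congrArg ZMod.val hv
      rwa [ZMod.val_natCast] at this
    · intro hv
      rw [← ZMod.natCast_rightInverse w, ← hv, ZMod.natCast_mod]
  rw [show (Finset.univ.filter fun v : ZMod Nn => ((v.val : ℕ) : ZMod M) = w)
      = (Finset.univ.filter fun v : ZMod Nn => v.val % M = w.val) by
    apply Finset.filter_congr; intro v _; simpa using hcond v]
  rw [← Finset.card_fin D]
  symm
  have hlt : ∀ k : Fin D, M * k.val + w.val < Nn := by
    intro k
    have := k.isLt
    calc M * k.val + w.val < M * (k.val + 1) := by
          rw [Nat.mul_add, Nat.mul_one]; omega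
      _ ≤ M * D := Nat.mul_le_mul_left _ (by omega)
      _ = Nn := by rw [h, Nat.mul_comm]
  apply Finset.card_nbij' (fun (k : Fin D) => ((M * k.val + w.val : ℕ) : ZMod Nn))
      (fun v => (⟨v.val / M, (Nat.div_lt_iff_lt_mul hM).mpr
        (lt_of_lt_of_le (ZMod.val_lt v) (le_of_eq h))⟩ : Fin D))
  · intro k _
    simp only [Finset.coe_filter, Set.mem_setOf_eq, Finset.mem_univ, true_and]
    rw [ZMod.val_natCast, Nat.mod_eq_of_lt (hlt k), Nat.mul_add_mod, Nat.mod_eq_of_lt hwv]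
  · intro v _; exact Finset.mem_univ _
  · intro k _
    ext
    simp only []
    rw [ZMod.val_natCast, Nat.mod_eq_of_lt (hlt k)]
    simp [Nat.mul_add_div hM, Nat.div_eq_of_lt hwv]
  · intro v hv
    simp only [Finset.coe_filter, Set.mem_setOf_eq, Finset.mem_univ, true_and] at hv
    simp only []
    have hdm : M * (v.val / M) + w.val = v.val := by
      rw [← hv]; exact Nat.div_add_mod v.val M
    rw [hdm]
    exact ZMod.natCast_rightInverse v

lemma card_filter_cpr_prod {Nn M D n' : ℕ} [NeZero Nn] [NeZero M] (h : Nn = D * M)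
    (Q : Fin n' × ZMod M → Bool) :
    (Finset.univ.filter fun p : Fin n' × ZMod Nn =>
        Q (p.1, ((p.2.val : ℕ) : ZMod M)) = true).card
      = D * (Finset.univ.filter fun q => Q q = true).card := by
  classical
  set cmap : Fin n' × ZMod Nn → Fin n' × ZMod M := fun p => (p.1, ((p.2.val : ℕ) : ZMod M))
    with hcmap
  rw [Finset.card_eq_sum_card_fiberwise
    (f := cmap) (t := Finset.univ.filter fun q => Q q = true)
    (fun p hp => by
      simp only [Finset.coe_filter, Set.mem_setOf_eq, Finset.mem_univ, true_and] at hp ⊢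
      exact hp)]
  have hfib : ∀ q ∈ Finset.univ.filter fun q => Q q = true,
      ((Finset.univ.filter fun p : Fin n' × ZMod Nn => Q (cmap p) = true).filter
        fun p => cmap p = q).card = D := by
    intro q hq
    simp only [Finset.mem_filter, Finset.mem_univ, true_and] at hq
    rw [Finset.filter_filter]
    have : (Finset.univ.filter fun p : Fin n' × ZMod Nn => Q (cmap p) = true ∧ cmap p = q)
        = Finset.univ.filter fun p => p.1 = q.1 ∧ ((p.2.val : ℕ) : ZMod M) = q.2 := by
      apply Finset.filter_congr
      intro p _
      simp only [hcmap, Prod.ext_iff]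
      constructor
      · rintro ⟨-, h1, h2⟩; exact ⟨h1, h2⟩
      · rintro ⟨h1, h2⟩
        refine ⟨?_, h1, h2⟩
        rw [show ((p.1, ((p.2.val : ℕ) : ZMod M)) : Fin n' × ZMod M) = q from
          Prod.ext_iff.mpr ⟨h1, h2⟩]
        exact hq
    rw [this, ← card_fiber h q.2]
    apply Finset.card_nbij' (fun p => p.2) (fun v => (q.1, v)) <;>
      simp +contextual [Finset.mem_filter, Set.MapsTo, Set.LeftInvOn, Set.RightInvOn]
  rw [Finset.sum_congr rfl hfib, Finset.sum_const, smul_eq_mul, mul_comm]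

section mainEquiv

variable {N M D m c d n n₁ n₂ : ℕ} [NeZero N] [NeZero M]

lemma unique_digits {D c₁ c₂ n₁ n₂ : ℕ} (h2 : c₂ < D) (hn₂ : n₂ < D)
    (h : D * c₁ + c₂ = D * n₁ + n₂) : c₁ = n₁ ∧ c₂ = n₂ := by
  have hmod := congrArg (· % D) h
  simp only [Nat.mul_add_mod] at hmod
  rw [Nat.mod_eq_of_lt h2, Nat.mod_eq_of_lt hn₂] at hmod
  have hD : 0 < D := by omega
  refine ⟨Nat.eq_of_mul_eq_mul_left hD (by omega), hmod⟩

lemma cpr_M_add (hMN : M ∣ N) (v : ZMod N) :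
    cpr M (((M : ℕ) : ZMod N) + v) = cpr M v := by
  conv_lhs => rw [show v = ((v.val : ℕ) : ZMod N) from (ZMod.natCast_rightInverse v).symm]
  rw [← Nat.cast_add, cpr_natCast hMN]
  unfold cpr
  push_cast
  simp

/-- Glue a compressed left colouring and a right colouring into a colouring of the sum type. -/
def glue (F : Fin (2*m) → (Fin c × ZMod M) → Bool) (h : Fin (2*m) → Fin d → Bool) :
    Fin (2*m) → ((Fin c × ZMod N) ⊕ Fin d) → Bool :=
  fun i => Sum.elim (fun p => F i (p.1, cpr M p.2)) (fun w => h i w)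

lemma glue_fixed (hMN : M ∣ N) (F : Fin (2*m) → (Fin c × ZMod M) → Bool)
    (h : Fin (2*m) → Fin d → Bool) (i : Fin (2*m)) (j : (Fin c × ZMod N) ⊕ Fin d) :
    glue F h i (shiftT ((M : ℕ) : ZMod N) j) = glue F h i j := by
  cases j with
  | inl p => simp [glue, cpr_M_add hMN]
  | inr w => simp [glue]

lemma good_glue_iff (hNDM : N = D * M) (hd : d < D) (hn₂ : n₂ < D) (hn : n = D * n₁ + n₂)
    (F : Fin (2*m) → (Fin c × ZMod M) → Bool) (h : Fin (2*m) → Fin d → Bool) :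
    good m n (glue (N := N) F h) ↔ (good m n₁ F ∧ good m n₂ h) := by
  have hMN : M ∣ N := Dvd.intro_left D hNDM.symm
  have hcol : ∀ i, (Finset.univ.filter fun j : (Fin c × ZMod N) ⊕ Fin d =>
      glue (N := N) F h i j = true).card
      = D * (Finset.univ.filter fun q : Fin c × ZMod M => F i q = true).card
        + (Finset.univ.filter fun w : Fin d => h i w = true).card := by
    intro i
    rw [← Finset.card_toLeft_add_card_toRight]
    congr 1
    · rw [show (Finset.univ.filter fun j : (Fin c × ZMod N) ⊕ Fin d =>
          glue (N := N) F h i j = true).toLeft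
          = Finset.univ.filter fun p : Fin c × ZMod N => F i (p.1, cpr M p.2) = true from by
        ext p; simp only [Finset.mem_toLeft, Finset.mem_filter, Finset.mem_univ, true_and]; exact Iff.rfl]
      exact card_filter_cpr_prod hNDM (fun q => F i q)
    · rw [show (Finset.univ.filter fun j : (Fin c × ZMod N) ⊕ Fin d =>
          glue (N := N) F h i j = true).toRight
          = Finset.univ.filter fun w : Fin d => h i w = true from by
        ext w; simp only [Finset.mem_toRight, Finset.mem_filter, Finset.mem_univ, true_and]; exact Iff.rfl]
  constructor
  · rintro ⟨hr, hc⟩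
    have hcol' : ∀ i,
        (Finset.univ.filter fun q : Fin c × ZMod M => F i q = true).card = n₁ ∧
        (Finset.univ.filter fun w : Fin d => h i w = true).card = n₂ := by
      intro i
      have h1 := hc i
      rw [hcol i, hn] at h1
      refine unique_digits ?_ hn₂ h1
      calc (Finset.univ.filter fun w : Fin d => h i w = true).card
          ≤ (Finset.univ : Finset (Fin d)).card := Finset.card_filter_le _ _
        _ = d := Finset.card_fin d
        _ < D := hd
    refine ⟨⟨?_, fun i => (hcol' i).1⟩, ⟨?_, fun i => (hcol' i).2⟩⟩
    · intro q
      have := hr (Sum.inl (q.1, ((q.2.val : ℕ) : ZMod N)))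
      simp only [glue, Sum.elim_inl] at this
      simp only [cpr_val hMN] at this
      exact this
    · intro w
      exact hr (Sum.inr w)
  · rintro ⟨⟨hrF, hcF⟩, ⟨hrh, hch⟩⟩
    constructor
    · intro j
      cases j with
      | inl p => exact hrF (p.1, cpr M p.2)
      | inr w => exact hrh w
    · intro i
      rw [hcol i, hcF i, hch i, hn]

lemma fixed_eq_glue (hMN : M ∣ N) (f : Fin (2*m) → ((Fin c × ZMod N) ⊕ Fin d) → Bool)
    (hfix : ∀ i j, f i (shiftT ((M : ℕ) : ZMod N) j) = f i j) :
    f = glue (N := N) (M := M) (fun i (q : Fin c × ZMod M) => f i (Sum.inl (q.1, ((q.2.val : ℕ) : ZMod N))))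
        (fun i w => f i (Sum.inr w)) := by
  funext i j
  cases j with
  | inl p =>
    show f i (Sum.inl (p.1, p.2)) = f i (Sum.inl (p.1, (((cpr M p.2).val : ℕ) : ZMod N)))
    exact period_eq f hfix i p.1 p.2 _ (cpr_val hMN (cpr M p.2)).symm
  | inr w => rfl

/-- The fixed points of the shift action are in bijection with pairs of balanced colourings. -/
def fixedEquiv (hNDM : N = D * M) (hd : d < D) (hn₂ : n₂ < D) (hn : n = D * n₁ + n₂) :
    {x : {f : Fin (2*m) → ((Fin c × ZMod N) ⊕ Fin d) → Bool // good m n f} //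
        (Multiplicative.ofAdd ((M : ℕ) : ZMod N)) • x = x} ≃
    ({F : Fin (2*m) → (Fin c × ZMod M) → Bool // good m n₁ F} ×
     {h : Fin (2*m) → Fin d → Bool // good m n₂ h}) := by
  have hMN : M ∣ N := Dvd.intro_left D hNDM.symm
  have hfix : ∀ x : {x : {f : Fin (2*m) → ((Fin c × ZMod N) ⊕ Fin d) → Bool // good m n f} //
      (Multiplicative.ofAdd ((M : ℕ) : ZMod N)) • x = x},
      ∀ i j, x.1.1 i (shiftT ((M : ℕ) : ZMod N) j) = x.1.1 i j := by
    intro x i j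
    exact congrFun (congrFun (congrArg Subtype.val x.2) i) j
  have hglue : ∀ x : {x : {f : Fin (2*m) → ((Fin c × ZMod N) ⊕ Fin d) → Bool // good m n f} //
      (Multiplicative.ofAdd ((M : ℕ) : ZMod N)) • x = x},
      x.1.1 = glue (N := N) (M := M) (fun i (q : Fin c × ZMod M) => x.1.1 i (Sum.inl (q.1, ((q.2.val : ℕ) : ZMod N))))
        (fun i w => x.1.1 i (Sum.inr w)) :=
    fun x => fixed_eq_glue hMN x.1.1 (hfix x)
  refine
  { toFun := fun x =>
      (⟨fun i q => x.1.1 i (Sum.inl (q.1, ((q.2.val : ℕ) : ZMod N))),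
        (((good_glue_iff hNDM hd hn₂ hn _ _).mp ((hglue x) ▸ x.1.2)).1)⟩,
       ⟨fun i w => x.1.1 i (Sum.inr w),
        (((good_glue_iff hNDM hd hn₂ hn _ _).mp ((hglue x) ▸ x.1.2)).2)⟩)
    invFun := fun Fh => ⟨⟨glue (N := N) Fh.1.1 Fh.2.1,
      (good_glue_iff hNDM hd hn₂ hn _ _).mpr ⟨Fh.1.2, Fh.2.2⟩⟩, ?_⟩
    left_inv := ?_
    right_inv := ?_ }
  · apply Subtype.ext
    funext i j
    exact glue_fixed hMN _ _ i j
  · intro x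
    apply Subtype.ext
    apply Subtype.ext
    exact (hglue x).symm
  · rintro ⟨⟨F, hF⟩, ⟨h, hh⟩⟩
    refine Prod.ext ?_ ?_
    · apply Subtype.ext
      funext i q
      show glue (N := N) F h i (Sum.inl (q.1, ((q.2.val : ℕ) : ZMod N))) = F i q
      simp only [glue, Sum.elim_inl]
      rw [cpr_val hMN]
    · rfl

end mainEquiv


theorem stmt_2 (m : ℕ) (hm : 0 < m) (a b n' n'' : ℕ) (hn'' : n'' < 2 ^ b)
    (n : ℕ) (hn : n = 2 ^ (a + b + 1) * n' + n'') :
    B m n ≡ B m (2 ^ a * n') * B m n'' [MOD 2 ^ (a + 2)] := by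
  classical
  set N : ℕ := 2 ^ (a + b + 2) with hN
  set M : ℕ := 2 ^ (a + 1) with hM
  set D : ℕ := 2 ^ (b + 1) with hD
  haveI : NeZero N := ⟨pow_ne_zero _ two_ne_zero⟩
  haveI : NeZero M := ⟨pow_ne_zero _ two_ne_zero⟩
  have hNDM : N = D * M := by rw [hN, hD, hM, ← pow_add]; ring_nf
  have hd : 2 * n'' < D := by
    have : D = 2 * 2 ^ b := by rw [hD, pow_succ]; ring
    omega
  have hn₂ : n'' < D := by omega
  have hnn : n = D * (2 ^ a * n') + n'' := by
    rw [hn, hD, ← mul_assoc, ← pow_add, show b + 1 + a = a + b + 1 from by omega]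
  -- the big row-index type
  set T : Type := (Fin n' × ZMod N) ⊕ Fin (2 * n'') with hT
  have hcardT : Fintype.card T = 2 * n := by
    show Fintype.card ((Fin n' × ZMod N) ⊕ Fin (2 * n'')) = 2 * n
    rw [Fintype.card_sum, Fintype.card_prod, Fintype.card_fin, Fintype.card_fin, ZMod.card,
      hn, hN, pow_succ]
    ring
  -- identify B m n with colourings indexed by T
  have h1 : B m n = Nat.card {f : Fin (2*m) → T → Bool // good m n f} :=
    (card_good_eq_B m n hcardT).symm
  -- the fixed-point congruence
  set g₀ : Multiplicative (ZMod N) := Multiplicative.ofAdd ((M : ℕ) : ZMod N) with hg₀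
  haveI : Fintype {f : Fin (2*m) → T → Bool // good m n f} := Fintype.ofFinite _
  have hcardG : Fintype.card (Multiplicative (ZMod N)) = 2 ^ (a + b + 2) := by
    rw [show Fintype.card (Multiplicative (ZMod N)) = Fintype.card (ZMod N) from
      Fintype.card_congr Multiplicative.toAdd, ZMod.card]
  have hg : ∃ h : Multiplicative (ZMod N), h ^ 2 ^ (a + 1) = g₀ := by
    refine ⟨Multiplicative.ofAdd (1 : ZMod N), ?_⟩
    rw [hg₀]
    apply Multiplicative.toAdd.injective
    rw [toAdd_pow, toAdd_ofAdd, toAdd_ofAdd, nsmul_eq_mul, mul_one, hM]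
  have h2 : Nat.card {f : Fin (2*m) → T → Bool // good m n f}
      ≡ Nat.card {x : {f : Fin (2*m) → T → Bool // good m n f} // g₀ • x = x}
        [MOD 2 ^ (a + 2)] :=
    card_modEq_card_fixed (G := Multiplicative (ZMod N))
      (X := {f : Fin (2*m) → T → Bool // good m n f}) (a+b+2) (a+1) hcardG g₀ hg
  -- identify the fixed points with the product
  have h3 : Nat.card {x : {f : Fin (2*m) → T → Bool // good m n f} // g₀ • x = x}
      = B m (2 ^ a * n') * B m n'' := by
    rw [Nat.card_congr (fixedEquiv (m := m) (n := n) (c := n') (d := 2 * n'')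
      (n₁ := 2 ^ a * n') (n₂ := n'') hNDM hd hn₂ hnn), Nat.card_prod,
      card_good_eq_B m (2 ^ a * n') (by
        rw [Fintype.card_prod, Fintype.card_fin, ZMod.card, hM, pow_succ]
        ring),
      card_good_eq_B m n'' (by rw [Fintype.card_fin])]
  rw [h1, ← h3]
  exact h2
end

section
/- Let n be a positive integer and let x₁, x₂, x₃, x₄, x₅, x₆, x₇ be nonnegative integers satisfying x₁ + x₂ + x₃ + x₄ + x₅ + x₆ + x₇ = 2n, x₁ + x₄ = x₂ + x₃, x₁ + x₆ = x₂ + x₅, and x₃ + x₆ = x₄ + x₅. Then s₂(x₁) + s₂(x₂) + s₂(x₃) + s₂(x₄) + s₂(x₅) + s₂(x₆) + s₂(x₇) + s₂(x₁ + x₂ + x₇) + s₂(x₃ + x₄ + x₇) + s₂(x₅ + x₆ + x₇) ≥ 3·s₂(n). -/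
/-- By Legendre's formula this is the divisibility `a! b! ∣ (a + b)!` read off at `p`. -/
theorem Nat.digits_sum_add_le (p : ℕ) [Fact p.Prime] (a b : ℕ) :
    (p.digits (a + b)).sum ≤ (p.digits a).sum + (p.digits b).sum := by
  obtain ⟨c, hc⟩ := Nat.factorial_mul_factorial_dvd_factorial_add a b
  have hc0 : c ≠ 0 := by
    rintro rfl
    exact Nat.factorial_ne_zero _ (by simpa using hc)
  have hval : padicValNat p a.factorial + padicValNat p b.factorial ≤
      padicValNat p (a + b).factorial := by
    rw [hc, padicValNat.mul (by positivity) hc0,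
      padicValNat.mul (Nat.factorial_ne_zero a) (Nat.factorial_ne_zero b)]
    exact Nat.le_add_right _ _
  have hlegendre := Nat.mul_le_mul_left (p - 1) hval
  rw [Nat.mul_add, sub_one_mul_padicValNat_factorial, sub_one_mul_padicValNat_factorial,
    sub_one_mul_padicValNat_factorial] at hlegendre
  have := Nat.digit_sum_le p a
  have := Nat.digit_sum_le p b
  have := Nat.digit_sum_le p (a + b)
  omega

lemma s2_add_le (a b : ℕ) : s2 (a + b) ≤ s2 a + s2 b :=
  have : Fact (Nat.Prime 2) := ⟨Nat.prime_two⟩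
  Nat.digits_sum_add_le 2 a b

lemma s2_two_mul (x : ℕ) : s2 (2 * x) = s2 x := by
  rcases Nat.eq_zero_or_pos x with rfl | hx
  · rfl
  · simp [s2, Nat.digits_base_mul one_lt_two hx]

lemma s2_le_of_two_mul_eq {n a b c : ℕ} (h : 2 * n = 2 * a + 2 * b + c) :
    s2 n ≤ s2 a + s2 b + s2 c := by
  obtain ⟨k, rfl⟩ : ∃ k, c = 2 * k := ⟨n - a - b, by omega⟩
  obtain rfl : n = a + b + k := by omega
  rw [s2_two_mul]
  calc s2 (a + b + k) ≤ s2 (a + b) + s2 k := s2_add_le _ _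
    _ ≤ s2 a + s2 b + s2 k := Nat.add_le_add_right (s2_add_le a b) _

theorem stmt_8_general (n : ℕ) (x₁ x₂ x₃ x₄ x₅ x₆ x₇ : ℕ)
    (hsum : x₁ + x₂ + x₃ + x₄ + x₅ + x₆ + x₇ = 2 * n)
    (h1 : x₁ + x₄ = x₂ + x₃) (h2 : x₁ + x₆ = x₂ + x₅) :
    s2 x₁ + s2 x₂ + s2 x₃ + s2 x₄ + s2 x₅ + s2 x₆ + s2 x₇ +
      s2 (x₁ + x₂ + x₇) + s2 (x₃ + x₄ + x₇) + s2 (x₅ + x₆ + x₇) ≥ 3 * s2 n := by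
  have g₁ : s2 n ≤ s2 x₃ + s2 x₆ + s2 (x₁ + x₂ + x₇) := s2_le_of_two_mul_eq (by omega)
  have g₂ : s2 n ≤ s2 x₂ + s2 x₅ + s2 (x₃ + x₄ + x₇) := s2_le_of_two_mul_eq (by omega)
  have g₃ : s2 n ≤ s2 x₁ + s2 x₄ + s2 (x₅ + x₆ + x₇) := s2_le_of_two_mul_eq (by omega)
  omega

theorem stmt_8 (n : ℕ) (hn : 0 < n) (x₁ x₂ x₃ x₄ x₅ x₆ x₇ : ℕ)
    (hsum : x₁ + x₂ + x₃ + x₄ + x₅ + x₆ + x₇ = 2 * n)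
    (h1 : x₁ + x₄ = x₂ + x₃) (h2 : x₁ + x₆ = x₂ + x₅) (h3 : x₃ + x₆ = x₄ + x₅) :
    s2 x₁ + s2 x₂ + s2 x₃ + s2 x₄ + s2 x₅ + s2 x₆ + s2 x₇ +
      s2 (x₁ + x₂ + x₇) + s2 (x₃ + x₄ + x₇) + s2 (x₅ + x₆ + x₇) ≥ 3 * s2 n :=
  stmt_8_general n x₁ x₂ x₃ x₄ x₅ x₆ x₇ hsum h1 h2
end

section
/- For all positive integers m and n, the exponent of 2 in the prime factorisation of B(m, n) is at least s₂(m) + s₂(n) − 1. -/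
open Finset

namespace Stmt12Aux

variable {α : Type*} [Fintype α] [DecidableEq α]

/-- weight of a boolean pattern -/
def wt (r : α → Bool) : ℕ := (Finset.univ.filter fun i => r i = true).card

lemma card_filter_comp_perm (σ : Equiv.Perm α) (p : α → Bool) :
    (Finset.univ.filter fun x => p (σ x) = true).card
      = (Finset.univ.filter fun x => p x = true).card :=
  Finset.card_equiv σ (by simp)

lemma exists_perm_pattern {r r' : α → Bool} (h : wt r = wt r') :
    ∃ σ : Equiv.Perm α, ∀ i, r' (σ i) = r i := by
  classical
  have h1 : Fintype.card {x // r x = true} = Fintype.card {x // r' x = true} := by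
    simpa [Fintype.card_subtype, wt] using h
  have h2 : Fintype.card {x // ¬ r x = true} = Fintype.card {x // ¬ r' x = true} := by
    rw [Fintype.card_subtype_compl, Fintype.card_subtype_compl, h1]
  let e₁ := Fintype.equivOfCardEq h1
  let e₂ := Fintype.equivOfCardEq h2
  refine ⟨(Equiv.sumCompl (fun x => r x = true)).symm.trans
    ((e₁.sumCongr e₂).trans (Equiv.sumCompl (fun x => r' x = true))), fun i => ?_⟩
  by_cases hi : r i = true
  · rw [Equiv.trans_apply, Equiv.trans_apply,
      Equiv.sumCompl_symm_apply_of_pos (p := fun x => r x = true) hi, Equiv.sumCongr_apply,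
      Sum.map_inl, Equiv.sumCompl_apply_inl]
    rw [hi]
    exact (e₁ ⟨i, hi⟩).2
  · rw [Equiv.trans_apply, Equiv.trans_apply,
      Equiv.sumCompl_symm_apply_of_neg (p := fun x => r x = true) hi, Equiv.sumCongr_apply,
      Sum.map_inr, Equiv.sumCompl_apply_inr]
    have h3 := (e₂ ⟨i, hi⟩).2
    simp only [Bool.not_eq_true] at h3 hi
    rw [hi, h3]

lemma card_fibration {X W : Type*} [Fintype X] [Fintype W] [DecidableEq W] (φ : X → W)
    (h : ∀ w w' : W, Fintype.card {x // φ x = w} = Fintype.card {x // φ x = w'}) (w₀ : W) :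
    Fintype.card X = Fintype.card W * Fintype.card {x // φ x = w₀} := by
  classical
  rw [← Fintype.card_congr (Equiv.sigmaFiberEquiv φ), Fintype.card_sigma]
  rw [Finset.sum_congr rfl (fun w _ => h w w₀)]
  simp [Finset.card_univ, mul_comm]

lemma card_pattern (k : ℕ) :
    Fintype.card {r : α → Bool // wt r = k} = (Fintype.card α).choose k := by
  classical
  have e : {r : α → Bool // wt r = k} ≃ {s : Finset α // s.card = k} :=
    { toFun := fun r => ⟨Finset.univ.filter fun i => r.1 i = true, r.2⟩
      invFun := fun s => ⟨fun i => decide (i ∈ s.1), by simpa [wt] using s.2⟩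
      left_inv := fun r => by
        apply Subtype.ext; funext i
        by_cases hi : r.1 i = true <;> simp [hi]
      right_inv := fun s => by
        apply Subtype.ext; ext i; simp }
  rw [Fintype.card_congr e, Fintype.card_subtype]
  have : (Finset.univ.filter fun s : Finset α => s.card = k)
      = Finset.powersetCard k (Finset.univ : Finset α) := by
    rw [Finset.powersetCard_eq_filter, Finset.powerset_univ]
  rw [this, Finset.card_powersetCard, Finset.card_univ]

lemma card_filter_val_lt {N k : ℕ} (hk : k ≤ N) :
    (Finset.univ.filter fun i : Fin N => (i : ℕ) < k).card = k := by
  have : (Finset.univ.filter fun i : Fin N => (i : ℕ) < k).card = (Finset.range k).card := by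
    refine Finset.card_bij (fun i _ => (i : ℕ)) ?_ ?_ ?_
    · intro a ha; simp only [Finset.mem_filter] at ha; simpa using ha.2
    · intro a _ b _ hab; exact Fin.val_injective hab
    · intro b hb
      simp only [Finset.mem_range] at hb
      exact ⟨⟨b, lt_of_lt_of_le hb hk⟩, by simp [hb], rfl⟩
  simpa using this

lemma card_filter_subtype_ne {a : α} (p : α → Bool) (hpa : p a = true) :
    (Finset.univ.filter fun x : {x : α // x ≠ a} => p x.1 = true).card
      = (Finset.univ.filter fun x => p x = true).card - 1 := by
  classical
  have ha : a ∈ Finset.univ.filter fun x => p x = true := by simp [hpa]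
  rw [← Finset.card_erase_of_mem ha]
  refine Finset.card_bij (fun x _ => x.1) ?_ ?_ ?_
  · intro x hx
    simp only [Finset.mem_filter] at hx
    simp [Finset.mem_erase, x.2, hx.2]
  · intro x _ y _ hxy; exact Subtype.ext hxy
  · intro b hb
    simp only [Finset.mem_erase, Finset.mem_filter] at hb
    exact ⟨⟨b, hb.1⟩, by simp [hb.2.2], rfl⟩


def Grid (m n : ℕ) : Type :=
  {f : Fin (2 * m) → Fin (2 * n) → Bool //
    (∀ j, (Finset.univ.filter fun i => f i j = true).card = m) ∧
    (∀ i, (Finset.univ.filter fun j => f i j = true).card = n)}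

noncomputable instance (m n : ℕ) : Fintype (Grid m n) := by
  unfold Grid
  classical
  infer_instance

/-- permuting rows and columns preserves balance -/
def gridPerm (m n : ℕ) (σ : Equiv.Perm (Fin (2 * m))) (τ : Equiv.Perm (Fin (2 * n))) :
    Grid m n ≃ Grid m n where
  toFun f := ⟨fun i j => f.1 (σ i) (τ j), by
    refine ⟨fun j => ?_, fun i => ?_⟩
    · rw [card_filter_comp_perm σ (fun i => f.1 i (τ j))]; exact f.2.1 (τ j)
    · rw [card_filter_comp_perm τ (fun j => f.1 (σ i) j)]; exact f.2.2 (σ i)⟩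
  invFun f := ⟨fun i j => f.1 (σ.symm i) (τ.symm j), by
    refine ⟨fun j => ?_, fun i => ?_⟩
    · rw [card_filter_comp_perm σ.symm (fun i => f.1 i (τ.symm j))]; exact f.2.1 (τ.symm j)
    · rw [card_filter_comp_perm τ.symm (fun j => f.1 (σ.symm i) j)]; exact f.2.2 (σ.symm i)⟩
  left_inv f := by apply Subtype.ext; funext i j; simp
  right_inv f := by apply Subtype.ext; funext i j; simp

@[simp] lemma gridPerm_apply (m n : ℕ) (σ : Equiv.Perm (Fin (2 * m)))
    (τ : Equiv.Perm (Fin (2 * n))) (f : Grid m n) (i : Fin (2 * m)) (j : Fin (2 * n)) :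
    ((gridPerm m n σ τ) f).1 i j = f.1 (σ i) (τ j) := rfl

lemma grid_nonempty (m n : ℕ) : Nonempty (Grid m n) := by
  refine ⟨⟨fun i j => decide (((i : ℕ) < m) ↔ ((j : ℕ) < n)), fun j => ?_, fun i => ?_⟩⟩
  · by_cases hj : (j : ℕ) < n
    · have : (Finset.univ.filter fun i : Fin (2 * m) =>
          decide (((i : ℕ) < m) ↔ ((j : ℕ) < n)) = true)
          = Finset.univ.filter fun i : Fin (2 * m) => (i : ℕ) < m := by
        apply Finset.filter_congr; intro i _; simp [hj]
      rw [this, card_filter_val_lt (by omega)]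
    · have : (Finset.univ.filter fun i : Fin (2 * m) =>
          decide (((i : ℕ) < m) ↔ ((j : ℕ) < n)) = true)
          = Finset.univ.filter fun i : Fin (2 * m) => ¬ ((i : ℕ) < m) := by
        apply Finset.filter_congr; intro i _; simp [hj]
      rw [this]
      have h2 := Finset.card_filter_add_card_filter_not
        (s := (Finset.univ : Finset (Fin (2 * m)))) (p := fun i => (i : ℕ) < m)
      rw [card_filter_val_lt (by omega : m ≤ 2 * m)] at h2
      simp only [Finset.card_univ, Fintype.card_fin] at h2
      omega
  · by_cases hi : (i : ℕ) < m
    · have : (Finset.univ.filter fun j : Fin (2 * n) =>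
          decide (((i : ℕ) < m) ↔ ((j : ℕ) < n)) = true)
          = Finset.univ.filter fun j : Fin (2 * n) => (j : ℕ) < n := by
        apply Finset.filter_congr; intro j _; simp [hi]
      rw [this, card_filter_val_lt (by omega)]
    · have : (Finset.univ.filter fun j : Fin (2 * n) =>
          decide (((i : ℕ) < m) ↔ ((j : ℕ) < n)) = true)
          = Finset.univ.filter fun j : Fin (2 * n) => ¬ ((j : ℕ) < n) := by
        apply Finset.filter_congr; intro j _; simp [hi]
      rw [this]
      have h2 := Finset.card_filter_add_card_filter_not
        (s := (Finset.univ : Finset (Fin (2 * n)))) (p := fun j => (j : ℕ) < n)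
      rw [card_filter_val_lt (by omega : n ≤ 2 * n)] at h2
      simp only [Finset.card_univ, Fintype.card_fin] at h2
      omega


abbrev Pat (M k : ℕ) : Type := {r : Fin M → Bool // wt r = k}

def rowPat (m n : ℕ) (j₀ : Fin (2 * n)) (f : Grid m n) : Pat (2 * m) m :=
  ⟨fun i => f.1 i j₀, f.2.1 j₀⟩

lemma fib1 (m n : ℕ) (j₀ : Fin (2 * n)) (w w' : Pat (2 * m) m) :
    Fintype.card {x : Grid m n // rowPat m n j₀ x = w}
      = Fintype.card {x : Grid m n // rowPat m n j₀ x = w'} := by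
  classical
  obtain ⟨σ, hσ⟩ := exists_perm_pattern (w.2.trans w'.2.symm)
  refine Fintype.card_congr (Equiv.subtypeEquiv (gridPerm m n σ.symm 1) fun f => ?_)
  rw [Subtype.ext_iff, Subtype.ext_iff, funext_iff, funext_iff]
  constructor
  · intro hf i
    show f.1 (σ.symm i) j₀ = w'.1 i
    have hfi : f.1 (σ.symm i) j₀ = w.1 (σ.symm i) := hf (σ.symm i)
    rw [hfi, ← hσ (σ.symm i), Equiv.apply_symm_apply]
  · intro hf i
    show f.1 i j₀ = w.1 i
    have h1 : f.1 (σ.symm (σ i)) j₀ = w'.1 (σ i) := hf (σ i)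
    rw [Equiv.symm_apply_apply] at h1
    rw [h1, hσ i]

lemma step2 (m n : ℕ) (hn : 0 < n) (j₀ : Fin (2 * n)) (w₀ : Pat (2 * m) m)
    (i₀ : Fin (2 * m)) (hw0 : w₀.1 i₀ = true) :
    ∃ Y : ℕ, Fintype.card {x : Grid m n // rowPat m n j₀ x = w₀}
      = (2 * n - 1).choose (n - 1) * Y := by
  classical
  -- the fibering map: pattern of column i₀ on the rows other than j₀
  have pf : ∀ x : {x : Grid m n // rowPat m n j₀ x = w₀},
      wt (fun j : {j : Fin (2 * n) // j ≠ j₀} => x.1.1 i₀ j.1) = n - 1 := by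
    intro x
    have h00 : x.1.1 i₀ j₀ = true := by
      have := congrFun (congrArg Subtype.val x.2) i₀
      rw [show (rowPat m n j₀ x.1).1 i₀ = x.1.1 i₀ j₀ from rfl] at this
      rw [this, hw0]
    unfold wt
    rw [card_filter_subtype_ne (fun j => x.1.1 i₀ j) h00, x.1.2.2 i₀]
  let φ : {x : Grid m n // rowPat m n j₀ x = w₀} →
      {c : {j : Fin (2 * n) // j ≠ j₀} → Bool // wt c = n - 1} :=
    fun x => ⟨fun j => x.1.1 i₀ j.1, pf x⟩
  have hfib : ∀ c c', Fintype.card {x // φ x = c} = Fintype.card {x // φ x = c'} := by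
    intro c c'
    obtain ⟨ρ, hρ⟩ := exists_perm_pattern (c.2.trans c'.2.symm)
    set τ : Equiv.Perm (Fin (2 * n)) := Equiv.Perm.ofSubtype ρ with hτdef
    have hτsymm : τ.symm = Equiv.Perm.ofSubtype ρ.symm := by
      rw [← Equiv.Perm.inv_def, ← Equiv.Perm.inv_def, ← map_inv]
    have hτ : ∀ j : {j : Fin (2 * n) // j ≠ j₀}, τ.symm j.1 = (ρ.symm j).1 := by
      intro j
      rw [hτsymm, Equiv.Perm.ofSubtype_apply_of_mem ρ.symm j.2]
    have hτ0 : τ.symm j₀ = j₀ := by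
      rw [hτsymm]
      exact Equiv.Perm.ofSubtype_apply_of_not_mem ρ.symm (by simp)
    have key : ∀ f : Grid m n,
        rowPat m n j₀ ((gridPerm m n 1 τ.symm) f) = rowPat m n j₀ f := by
      intro f
      apply Subtype.ext; funext i
      show f.1 i (τ.symm j₀) = f.1 i j₀
      rw [hτ0]
    refine Fintype.card_congr (Equiv.subtypeEquiv
      (Equiv.subtypeEquiv (gridPerm m n 1 τ.symm) fun f => by rw [key f]) fun x => ?_)
    rw [Subtype.ext_iff, Subtype.ext_iff, funext_iff, funext_iff]
    constructor
    · intro hf j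
      show x.1.1 i₀ (τ.symm j.1) = c'.1 j
      rw [hτ j]
      have hfj : x.1.1 i₀ (ρ.symm j).1 = c.1 (ρ.symm j) := hf (ρ.symm j)
      rw [hfj, ← hρ (ρ.symm j), Equiv.apply_symm_apply]
    · intro hf j
      show x.1.1 i₀ j.1 = c.1 j
      have h1 : x.1.1 i₀ (τ.symm (ρ j).1) = c'.1 (ρ j) := hf (ρ j)
      rw [hτ (ρ j), Equiv.symm_apply_apply] at h1
      rw [h1, hρ j]
  -- choose a base point in the pattern space
  have hcardW : Fintype.card {c : {j : Fin (2 * n) // j ≠ j₀} → Bool // wt c = n - 1}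
      = (2 * n - 1).choose (n - 1) := by
    rw [card_pattern]
    congr 1
    rw [Fintype.card_subtype_compl, Fintype.card_subtype_eq, Fintype.card_fin]
  have hpos : 0 < Fintype.card {c : {j : Fin (2 * n) // j ≠ j₀} → Bool // wt c = n - 1} := by
    rw [hcardW]
    exact Nat.choose_pos (by omega)
  obtain ⟨c₀⟩ := Fintype.card_pos_iff.mp hpos
  refine ⟨Fintype.card {x // φ x = c₀}, ?_⟩
  rw [card_fibration φ hfib c₀, hcardW]

lemma grid_card (m n : ℕ) (hm : 0 < m) (hn : 0 < n) :
    ∃ Y : ℕ, Fintype.card (Grid m n)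
      = (2 * m).choose m * ((2 * n - 1).choose (n - 1) * Y) := by
  classical
  have hj : 0 < 2 * n := by omega
  have hi : 0 < 2 * m := by omega
  set j₀ : Fin (2 * n) := ⟨0, hj⟩
  set i₀ : Fin (2 * m) := ⟨0, hi⟩
  have hw : wt (fun i : Fin (2 * m) => decide ((i : ℕ) < m)) = m := by
    unfold wt
    have : (Finset.univ.filter fun i : Fin (2 * m) => decide ((i : ℕ) < m) = true)
        = Finset.univ.filter fun i : Fin (2 * m) => (i : ℕ) < m := by
      apply Finset.filter_congr; intro i _; simp
    rw [this, card_filter_val_lt (by omega)]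
  set w₀ : Pat (2 * m) m := ⟨fun i => decide ((i : ℕ) < m), hw⟩ with hw₀def
  have hw0 : w₀.1 i₀ = true := by
    show decide ((i₀ : ℕ) < m) = true
    simp [i₀, hm]
  have h1 : Fintype.card (Grid m n)
      = (2 * m).choose m * Fintype.card {x : Grid m n // rowPat m n j₀ x = w₀} := by
    have := card_fibration (rowPat m n j₀) (fib1 m n j₀) w₀
    rwa [card_pattern, Fintype.card_fin] at this
  obtain ⟨Y, hY⟩ := step2 m n hn j₀ w₀ i₀ hw0
  exact ⟨Y, by rw [h1, hY]⟩


lemma factorial_factorization_two (k : ℕ) :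
    (Nat.factorial k).factorization 2 = k - (Nat.digits 2 k).sum := by
  have h := Nat.Prime.sub_one_mul_multiplicity_factorial (n := k) Nat.prime_two
  rw [Nat.multiplicity_eq_factorization Nat.prime_two (Nat.factorial_ne_zero k)] at h
  simpa using h

lemma digits_sum_le (k : ℕ) : (Nat.digits 2 k).sum ≤ k := Nat.digit_sum_le 2 k

lemma digits_sum_two_mul (m : ℕ) (hm : 0 < m) :
    (Nat.digits 2 (2 * m)).sum = (Nat.digits 2 m).sum := by
  rw [Nat.digits_def' (by norm_num : 1 < 2) (by omega : 0 < 2 * m)]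
  simp [Nat.mul_div_cancel_left m (by norm_num : 0 < 2)]

lemma central_binom_factorization_two (m : ℕ) (hm : 0 < m) :
    ((2 * m).choose m).factorization 2 = (Nat.digits 2 m).sum := by
  have key := Nat.choose_mul_factorial_mul_factorial (show m ≤ 2 * m by omega)
  rw [show 2 * m - m = m by omega] at key
  have hc : (2 * m).choose m ≠ 0 := (Nat.choose_pos (by omega)).ne'
  have hf : Nat.factorial m ≠ 0 := Nat.factorial_ne_zero m
  have h2 : (((2 * m).choose m * Nat.factorial m) * Nat.factorial m).factorization 2
      = (Nat.factorial (2 * m)).factorization 2 := by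
    rw [← key]
  rw [Nat.factorization_mul (mul_ne_zero hc hf) hf, Nat.factorization_mul hc hf,
    Finsupp.add_apply, Finsupp.add_apply, factorial_factorization_two,
    factorial_factorization_two] at h2
  have h3 := digits_sum_le m
  have h4 := digits_sum_two_mul m hm
  have h5 := digits_sum_le (2 * m)
  omega

lemma choose_pred_eq (n : ℕ) (hn : 0 < n) :
    (2 * n).choose n = 2 * ((2 * n - 1).choose (n - 1)) := by
  obtain ⟨n', rfl⟩ : ∃ n', n = n' + 1 := ⟨n - 1, by omega⟩
  rw [show 2 * (n' + 1) = (2 * n' + 1) + 1 by ring,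
    show (2 * n' + 1) + 1 - 1 = 2 * n' + 1 by omega,
    show n' + 1 - 1 = n' by omega]
  rw [Nat.choose_succ_succ (2 * n' + 1) n']
  have hsymm : (2 * n' + 1).choose (n' + 1) = (2 * n' + 1).choose n' := by
    have := Nat.choose_symm (show n' ≤ 2 * n' + 1 by omega)
    rw [show 2 * n' + 1 - n' = n' + 1 by omega] at this
    exact this
  rw [hsymm]
  omega

lemma choose_pred_factorization_two (n : ℕ) (hn : 0 < n) :
    ((2 * n - 1).choose (n - 1)).factorization 2 + 1 = (Nat.digits 2 n).sum := by
  have h := central_binom_factorization_two n hn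
  rw [choose_pred_eq n hn] at h
  have hc : (2 * n - 1).choose (n - 1) ≠ 0 := (Nat.choose_pos (by omega)).ne'
  rw [Nat.factorization_mul (by norm_num) hc, Finsupp.add_apply] at h
  rw [Nat.Prime.factorization_self Nat.prime_two] at h
  omega

end Stmt12Aux

theorem stmt_12 (m n : ℕ) (hm : 0 < m) (hn : 0 < n) :
    s2 m + s2 n - 1 ≤ (B m n).factorization 2 := by
  classical
  have hBgrid : B m n = Fintype.card (Stmt12Aux.Grid m n) := by
    rw [B]
    exact Nat.card_eq_fintype_card
  obtain ⟨Y, hY⟩ := Stmt12Aux.grid_card m n hm hn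
  have hpos : 0 < Fintype.card (Stmt12Aux.Grid m n) :=
    @Fintype.card_pos _ _ (Stmt12Aux.grid_nonempty m n)
  have hYpos : Y ≠ 0 := by
    intro h
    rw [h, mul_zero, mul_zero] at hY
    omega
  have hc1 : (2 * m).choose m ≠ 0 := (Nat.choose_pos (by omega)).ne'
  have hc2 : (2 * n - 1).choose (n - 1) ≠ 0 := (Nat.choose_pos (by omega)).ne'
  rw [hBgrid, hY, Nat.factorization_mul hc1 (mul_ne_zero hc2 hYpos),
    Nat.factorization_mul hc2 hYpos, Finsupp.add_apply, Finsupp.add_apply,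
    Stmt12Aux.central_binom_factorization_two m hm]
  have h2 := Stmt12Aux.choose_pred_factorization_two n hn
  show s2 m + s2 n - 1 ≤ _
  unfold s2
  omega
end

section
/- For all positive integers m and n, B(m, n) = C(2n, n) · B‡(m, n), where C(2n, n) is the central binomial coefficient. -/
/-- `Bdd m n` (the paper's `B‡(m, n)`) is the number of balanced colourings of the
`2m × 2n` grid in which the top half of the leftmost column (the `n` rows `j` with
`j < n`) consists of white cells and its bottom half consists of black cells. -/
noncomputable def Bdd (m n : ℕ) : ℕ :=
  Nat.card {f : Fin (2 * m) → Fin (2 * n) → Bool //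
    ((∀ j, (Finset.univ.filter fun i => f i j = true).card = m) ∧
     (∀ i, (Finset.univ.filter fun j => f i j = true).card = n)) ∧
    ∀ i : Fin (2 * m), (i : ℕ) = 0 →
      ∀ j : Fin (2 * n), (f i j = true ↔ (j : ℕ) < n)}

/-- For any two finsets of the same cardinality in a fintype there is a permutation
carrying one onto the other. -/
lemma exists_perm_finset {α : Type*} [Fintype α] [DecidableEq α] (s t : Finset α)
    (h : s.card = t.card) : ∃ σ : Equiv.Perm α, ∀ x, σ x ∈ t ↔ x ∈ s := by
  classical
  have hc : (sᶜ : Finset α).card = (tᶜ : Finset α).card := by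
    rw [Finset.card_compl, Finset.card_compl, h]
  have e1 : {x // x ∈ s} ≃ {x // x ∈ t} := Finset.equivOfCardEq h
  have e2 : {x // x ∉ s} ≃ {x // x ∉ t} :=
    ((Equiv.subtypeEquivRight (fun x => (Finset.mem_compl).symm)).trans
      (Finset.equivOfCardEq hc)).trans (Equiv.subtypeEquivRight (fun x => Finset.mem_compl))
  refine ⟨((Equiv.sumCompl (· ∈ s)).symm.trans (e1.sumCongr e2)).trans
    (Equiv.sumCompl (· ∈ t)), fun x => ?_⟩
  by_cases hx : x ∈ s
  · simp [Equiv.sumCompl_symm_apply_of_pos hx, hx, (e1 ⟨x, hx⟩).2]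
  · simp [Equiv.sumCompl_symm_apply_of_neg hx, hx, (e2 ⟨x, hx⟩).2]

/-- Precomposing a predicate with a permutation does not change the filter cardinality. -/
lemma card_filter_comp_perm {α : Type*} [Fintype α] [DecidableEq α] (σ : Equiv.Perm α)
    (p : α → Prop) [DecidablePred p] :
    (Finset.univ.filter fun x => p (σ x)).card = (Finset.univ.filter p).card := by
  rw [← Fintype.card_subtype, ← Fintype.card_subtype]
  exact Fintype.card_congr (Equiv.subtypeEquiv σ (fun a => Iff.rfl))

lemma card_Tn (n : ℕ) (hn : 0 < n) :
    (Finset.univ.filter fun j : Fin (2 * n) => (j : ℕ) < n).card = n := by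
  have h : (Finset.univ.filter fun j : Fin (2 * n) => (j : ℕ) < n)
      = Finset.Iio (⟨n, by omega⟩ : Fin (2 * n)) := by
    ext j; simp [Fin.lt_def]
  rw [h, Fin.card_Iio]

/-- The number of balanced colourings whose leftmost column has white set exactly `S`
(for any `S` of cardinality `n`) equals `Bdd m n`. -/
lemma fiber_card (m n : ℕ) (hm : 0 < m) (hn : 0 < n) (S : Finset (Fin (2 * n)))
    (hS : S.card = n) :
    Nat.card {f : Fin (2 * m) → Fin (2 * n) → Bool //
      ((∀ j, (Finset.univ.filter fun i => f i j = true).card = m) ∧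
       (∀ i, (Finset.univ.filter fun j => f i j = true).card = n)) ∧
      ∀ j, (f ⟨0, by omega⟩ j = true ↔ j ∈ S)} = Bdd m n := by
  classical
  obtain ⟨σ, hσ⟩ := exists_perm_finset
    (Finset.univ.filter fun j : Fin (2 * n) => (j : ℕ) < n) S
    (by rw [card_Tn n hn, hS])
  have hσ' : ∀ x : Fin (2 * n), σ x ∈ S ↔ (x : ℕ) < n := by
    intro x; rw [hσ x]; simp
  rw [Bdd]
  refine Nat.card_congr ?_
  refine
    { toFun := fun x => ⟨fun i j => x.1 i (σ j), ⟨fun j => x.2.1.1 (σ j), fun i => ?_⟩,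
        fun i hi j => ?_⟩
      invFun := fun y => ⟨fun i j => y.1 i (σ.symm j), ⟨fun j => y.2.1.1 (σ.symm j),
        fun i => ?_⟩, fun j => ?_⟩
      left_inv := fun x => Subtype.ext (funext fun i => funext fun j => by simp)
      right_inv := fun y => Subtype.ext (funext fun i => funext fun j => by simp) }
  · exact (card_filter_comp_perm σ (fun j => x.1 i j = true)).trans (x.2.1.2 i)
  · have hie : i = ⟨0, by omega⟩ := Fin.ext hi
    show x.1 i (σ j) = true ↔ (j : ℕ) < n
    rw [hie, x.2.2 (σ j)]
    exact hσ' j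
  · exact (card_filter_comp_perm σ.symm (fun j => y.1 i j = true)).trans (y.2.1.2 i)
  · rw [y.2.2 ⟨0, by omega⟩ rfl (σ.symm j)]
    rw [← hσ' (σ.symm j), Equiv.apply_symm_apply]

theorem stmt_13 (m n : ℕ) (hm : 0 < m) (hn : 0 < n) :
    B m n = Nat.choose (2 * n) n * Bdd m n := by
  classical
  have h2m : 0 < 2 * m := by omega
  set i0 : Fin (2 * m) := ⟨0, h2m⟩ with hi0
  set P : (Fin (2 * m) → Fin (2 * n) → Bool) → Prop := fun f =>
    (∀ j, (Finset.univ.filter fun i => f i j = true).card = m) ∧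
    (∀ i, (Finset.univ.filter fun j => f i j = true).card = n) with hP
  set φ : (Fin (2 * m) → Fin (2 * n) → Bool) → Finset (Fin (2 * n)) := fun f =>
    Finset.univ.filter fun j => f i0 j = true with hφ
  rw [B, Nat.card_eq_fintype_card, Fintype.card_subtype]
  rw [Finset.card_eq_sum_card_fiberwise (t := Finset.powersetCard n Finset.univ) (f := φ)
    (fun f hf => by
      rw [Finset.mem_coe, Finset.mem_powersetCard_univ]
      exact ((Finset.mem_filter.mp hf).2).2 i0)]
  have key : ∀ S ∈ Finset.powersetCard n (Finset.univ : Finset (Fin (2 * n))),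
      ((Finset.univ.filter P).filter fun f => φ f = S).card = Bdd m n := by
    intro S hS
    rw [Finset.filter_filter, ← Fintype.card_subtype, ← Nat.card_eq_fintype_card,
      ← fiber_card m n hm hn S (Finset.mem_powersetCard_univ.mp hS)]
    refine Nat.card_congr (Equiv.subtypeEquivRight fun f => ?_)
    constructor
    · rintro ⟨h1, h2⟩
      refine ⟨h1, fun j => ?_⟩
      rw [← h2]
      simp [hφ, hi0]
    · rintro ⟨h1, h2⟩
      refine ⟨h1, ?_⟩
      ext j
      simp [hφ, hi0, h2 j]
  rw [Finset.sum_congr rfl key, Finset.sum_const, Finset.card_powersetCard,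
    Finset.card_univ, Fintype.card_fin, smul_eq_mul]
end

section
/- Let m be a power of 2 and n a positive integer. Then B‡(m, n) is odd. -/
open Finset

section Helpers

lemma card_filter_rev {N : ℕ} (p : Fin N → Bool) :
    (univ.filter fun j : Fin N => p j.rev = true).card
      = (univ.filter fun j => p j = true).card := by
  apply Finset.card_bij' (fun j _ => j.rev) (fun j _ => j.rev) <;> simp

lemma card_filter_not {N : ℕ} (h : Fin N → Bool) :
    (univ.filter fun j : Fin N => (! h j) = true).card
      = N - (univ.filter fun j => h j = true).card := by
  have := Finset.card_filter_add_card_filter_not (s := (univ : Finset (Fin N)))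
    (p := fun j => h j = true)
  simp only [Bool.not_eq_true'] at *
  have h2 : (univ.filter fun j : Fin N => h j = false) =
      (univ.filter fun j : Fin N => ¬ h j = true) := by
    apply filter_congr; intro x _; simp
  rw [h2]
  have h3 : (univ : Finset (Fin N)).card = N := by simp
  omega

lemma card_filter_antisym {n : ℕ} (h : Fin (2 * n) → Bool)
    (hh : ∀ j, h j.rev = ! h j) :
    (univ.filter fun j => h j = true).card = n := by
  have h1 := card_filter_rev h
  have h2 : (univ.filter fun j : Fin (2*n) => h j.rev = true)
      = (univ.filter fun j : Fin (2*n) => (! h j) = true) := by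
    apply filter_congr; intro x _; rw [hh]
  rw [h2, card_filter_not] at h1
  have := Finset.card_filter_le (univ : Finset (Fin (2*n))) (fun j => h j = true)
  simp at this
  omega

lemma count_succ {M : ℕ} (r : Fin (M+1) → Bool) :
    (univ.filter fun i => r i = true).card
      = (if r 0 = true then 1 else 0)
        + (univ.filter fun i : Fin M => r i.succ = true).card := by
  rw [Finset.card_filter, Finset.card_filter, Fin.sum_univ_succ]

lemma row_equiv (M c : ℕ) :
    Nat.card {r : Fin (M + 1) → Bool //
      (univ.filter fun i => r i = true).card = c + 1 ∧ r 0 = true}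
    = Nat.card {t : Fin M → Bool // (univ.filter fun i => t i = true).card = c} := by
  apply Nat.card_congr
  refine ⟨fun r => ⟨fun i => r.1 i.succ, ?_⟩,
          fun t => ⟨Fin.cons true t.1, ?_⟩, ?_, ?_⟩
  · show (Finset.univ.filter fun i : Fin M => (r.1 : Fin (M+1) → Bool) i.succ = true).card = c
    have := count_succ r.1
    rw [r.2.1, if_pos r.2.2] at this
    omega
  · refine ⟨?_, by simp⟩
    have := count_succ (Fin.cons true t.1)
    simp only [Fin.cons_zero, Fin.cons_succ, if_pos] at this
    rw [this, t.2]
    omega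
  · intro r
    apply Subtype.ext
    funext i
    cases i using Fin.cases with
    | zero => simp [r.2.2]
    | succ i => simp
  · intro t
    apply Subtype.ext
    funext i
    simp

lemma count_card (M c : ℕ) :
    Nat.card {t : Fin M → Bool // (univ.filter fun i => t i = true).card = c}
      = Nat.choose M c := by
  classical
  have e : {t : Fin M → Bool // (univ.filter fun i => t i = true).card = c}
      ≃ {s : Finset (Fin M) // s.card = c} := by
    refine ⟨fun t => ⟨univ.filter fun i => t.1 i = true, t.2⟩,
            fun s => ⟨fun i => decide (i ∈ s.1), ?_⟩, ?_, ?_⟩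
    · show (univ.filter fun i => decide (i ∈ s.1) = true).card = c
      have hs : (univ.filter fun i => decide (i ∈ s.1) = true) = s.1 := by
        ext i; simp
      rw [hs, s.2]
    · intro t
      apply Subtype.ext
      funext i
      simp
    · intro s
      apply Subtype.ext
      ext i
      simp
  rw [Nat.card_congr e, Nat.card_eq_fintype_card]
  simp

lemma odd_choose_pow (s : ℕ) : ∀ r, r ≤ 2 ^ s - 1 → Odd (Nat.choose (2 ^ s - 1) r) := by
  haveI : Fact (Nat.Prime 2) := ⟨Nat.prime_two⟩
  induction s with
  | zero =>
    intro r hr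
    interval_cases r
    simp
  | succ s ih =>
    intro r hr
    have hpow : 2 ^ (s+1) = 2 * 2 ^ s := by ring
    have hp : 0 < 2 ^ s := Nat.pow_pos (by norm_num)
    have h := Choose.choose_modEq_choose_mod_mul_choose_div_nat
      (p := 2) (n := 2 ^ (s+1) - 1) (k := r)
    have h1 : (2 ^ (s+1) - 1) % 2 = 1 := by omega
    have h2 : (2 ^ (s+1) - 1) / 2 = 2 ^ s - 1 := by omega
    have h3 : Nat.choose 1 (r % 2) = 1 := by
      rcases Nat.mod_two_eq_zero_or_one r with h' | h' <;> simp [h']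
    rw [h1, h2, h3, one_mul] at h
    have h4 : r / 2 ≤ 2 ^ s - 1 := by omega
    have h5 := ih (r / 2) h4
    rw [Nat.odd_iff] at h5 ⊢
    unfold Nat.ModEq at h
    omega

lemma odd_row (L : ℕ) (k : ℕ) (hL : L = 2 * 2 ^ k) (i0 : Fin L) (hi0 : (i0 : ℕ) = 0) :
    Odd (Nat.card {r : Fin L → Bool //
      (univ.filter fun i => r i = true).card = 2 ^ k ∧ r i0 = true}) := by
  have hp : 0 < 2 ^ k := Nat.pow_pos (by norm_num)
  cases L with
  | zero => omega
  | succ M =>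
    have hi : i0 = 0 := Fin.ext (by simpa using hi0)
    subst hi
    obtain ⟨c, hc⟩ : ∃ c, 2 ^ k = c + 1 := ⟨2 ^ k - 1, by omega⟩
    rw [hc, row_equiv, count_card]
    have hM : M = 2 ^ (k+1) - 1 := by
      have : 2 ^ (k+1) = 2 * 2 ^ k := by ring
      omega
    have hcc : c = 2 ^ k - 1 := by omega
    subst hM
    apply odd_choose_pow
    have : 2 ^ (k+1) = 2 * 2 ^ k := by ring
    omega

end Helpers


variable {m n : ℕ}

/-- the balancedness predicate from `Bdd` -/
def Bal (m n : ℕ) (f : Fin (2 * m) → Fin (2 * n) → Bool) : Prop :=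
  ((∀ j, (Finset.univ.filter fun i => f i j = true).card = m) ∧
   (∀ i, (Finset.univ.filter fun j => f i j = true).card = n)) ∧
  ∀ i : Fin (2 * m), (i : ℕ) = 0 →
    ∀ j : Fin (2 * n), (f i j = true ↔ (j : ℕ) < n)

lemma rev_val {n : ℕ} (j : Fin (2 * n)) : (j.rev : ℕ) = 2 * n - 1 - j := by
  simp [Fin.val_rev]
  omega

def mkF (h2m : 0 < 2 * m) (hn : 0 < n)
    (g : Fin n → {r : Fin (2 * m) → Bool //
      (univ.filter fun i => r i = true).card = m ∧ r ⟨0, h2m⟩ = true}) :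
    Fin (2 * m) → Fin (2 * n) → Bool :=
  fun i j => if h : (j : ℕ) < n then (g ⟨j, h⟩).1 i
    else ! (g ⟨2 * n - 1 - (j : ℕ), by omega⟩).1 i

lemma mkF_anti (h2m : 0 < 2 * m) (hn : 0 < n)
    (g : Fin n → {r : Fin (2 * m) → Bool //
      (univ.filter fun i => r i = true).card = m ∧ r ⟨0, h2m⟩ = true}) :
    ∀ i j, mkF h2m hn g i j.rev = ! mkF h2m hn g i j := by
  intro i j
  have hrev := rev_val j
  have hj2 := j.2
  by_cases hj : (j : ℕ) < n
  · have h1 : ¬ ((j.rev : ℕ) < n) := by omega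
    simp only [mkF, dif_neg h1, dif_pos hj]
    have he : (⟨2 * n - 1 - (j.rev : ℕ), by omega⟩ : Fin n) = ⟨j, hj⟩ :=
      Fin.ext (by simp only [Fin.val_mk]; omega)
    rw [he]
  · have h1 : (j.rev : ℕ) < n := by omega
    simp only [mkF, dif_pos h1, dif_neg hj]
    rw [Bool.not_not]
    have he : (⟨(j.rev : ℕ), h1⟩ : Fin n) = ⟨2 * n - 1 - (j : ℕ), by omega⟩ :=
      Fin.ext (by simp only [Fin.val_mk]; omega)
    rw [he]

lemma mkF_bal (h2m : 0 < 2 * m) (hn : 0 < n)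
    (g : Fin n → {r : Fin (2 * m) → Bool //
      (univ.filter fun i => r i = true).card = m ∧ r ⟨0, h2m⟩ = true}) :
    Bal m n (mkF h2m hn g) := by
  refine ⟨⟨?_, ?_⟩, ?_⟩
  · intro j
    by_cases hj : (j : ℕ) < n
    · have he : (univ.filter fun i => mkF h2m hn g i j = true)
          = (univ.filter fun i => (g ⟨j, hj⟩).1 i = true) := by
        apply filter_congr; intro i _
        simp only [mkF, dif_pos hj]
      rw [he, (g ⟨j, hj⟩).2.1]
    · have he : (univ.filter fun i => mkF h2m hn g i j = true)
          = (univ.filter fun i => (! (g ⟨2 * n - 1 - (j : ℕ), by omega⟩).1 i) = true) := by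
        apply filter_congr; intro i _
        simp only [mkF, dif_neg hj]
      rw [he, card_filter_not, (g _).2.1]
      omega
  · intro i
    exact card_filter_antisym (fun j => mkF h2m hn g i j)
      (fun j => mkF_anti h2m hn g i j)
  · intro i0 hi0 j
    have hi : i0 = ⟨0, h2m⟩ := Fin.ext hi0
    by_cases hj : (j : ℕ) < n
    · simp only [mkF, dif_pos hj, hi, (g ⟨j, hj⟩).2.2]
      simpa using hj
    · simp only [mkF, dif_neg hj, hi, (g _).2.2]
      simpa using hj

def toRows (h2m : 0 < 2 * m) (hn : 0 < n) (f : Fin (2 * m) → Fin (2 * n) → Bool)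
    (hf : Bal m n f) :
    Fin n → {r : Fin (2 * m) → Bool //
      (univ.filter fun i => r i = true).card = m ∧ r ⟨0, h2m⟩ = true} :=
  fun a => ⟨fun i => f i ⟨(a : ℕ), by omega⟩, hf.1.1 ⟨(a : ℕ), by omega⟩,
    (hf.2 ⟨0, h2m⟩ rfl ⟨(a : ℕ), by omega⟩).2 a.2⟩

lemma bal_flip (hn : 0 < n) {f : Fin (2 * m) → Fin (2 * n) → Bool} (hf : Bal m n f) :
    Bal m n (fun i j => ! f i j.rev) := by
  obtain ⟨⟨hrow, hcol⟩, hfirst⟩ := hf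
  refine ⟨⟨?_, ?_⟩, ?_⟩
  · intro j
    rw [card_filter_not (fun i => f i j.rev), hrow j.rev]
    omega
  · intro i
    rw [card_filter_rev (fun j => ! f i j), card_filter_not, hcol i]
    omega
  · intro i hi j
    have h1 := hfirst i hi j.rev
    have h2 := rev_val j
    have h3 := j.2
    rw [Bool.not_eq_true']
    rw [Bool.eq_false_iff, Ne, h1]
    omega

theorem stmt_14 (k m : ℕ) (hm : m = 2 ^ k) (n : ℕ) (hn : 0 < n) :
    Odd (Bdd m n) := by
  classical
  subst hm
  set m := 2 ^ k with hm
  have hm1 : 0 < m := by rw [hm]; positivity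
  have h2m : 0 < 2 * m := by omega
  set α := {f : Fin (2 * m) → Fin (2 * n) → Bool // Bal m n f} with hα
  have hBdd : Bdd m n = Nat.card α := rfl
  haveI : Fintype α := Fintype.ofFinite α
  -- the involution
  let σ : Function.End α := fun f => ⟨fun i j => ! f.1 i j.rev, bal_flip hn f.2⟩
  have hσ2 : σ ^ 2 ^ 1 = 1 := by
    have h21 : (2 : ℕ) ^ 1 = 2 := by norm_num
    rw [h21, sq]
    funext f
    show σ (σ f) = f
    apply Subtype.ext
    funext i j
    show (! (! f.1 i j.rev.rev)) = f.1 i j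
    rw [Fin.rev_rev, Bool.not_not]
  haveI : Fact (Nat.Prime 2) := ⟨Nat.prime_two⟩
  have hmod := Equiv.Perm.card_fixedPoints_modEq (f := σ) hσ2
  -- the fixed points
  have hfix : ∀ f : α, f ∈ Function.fixedPoints σ ↔ ∀ i j, (! f.1 i j.rev) = f.1 i j := by
    intro f
    constructor
    · intro h i j
      exact congr_fun (congr_fun (congr_arg Subtype.val h) i) j
    · intro h
      apply Subtype.ext
      funext i j
      exact h i j
  -- Row type
  let Row := {r : Fin (2 * m) → Bool //
      (univ.filter fun i => r i = true).card = m ∧ r ⟨0, h2m⟩ = true}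
  -- equivalence between fixed points and (Fin n → Row)
  have E : (Function.fixedPoints σ) ≃ (Fin n → Row) := by
    refine ⟨fun f => toRows h2m hn f.1.1 f.1.2,
            fun g => ⟨⟨mkF h2m hn g, mkF_bal h2m hn g⟩, ?_⟩, ?_, ?_⟩
    · apply (hfix _).2
      intro i j
      show (! mkF h2m hn g i j.rev) = mkF h2m hn g i j
      rw [mkF_anti h2m hn g i j, Bool.not_not]
    · -- left inverse
      intro f
      apply Subtype.ext
      apply Subtype.ext
      funext i j
      show mkF h2m hn (toRows h2m hn f.1.1 f.1.2) i j = f.1.1 i j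
      have hf := (hfix f.1).1 f.2
      have hj2 := j.2
      have hrev := rev_val j
      simp only [mkF, toRows]
      split_ifs with h
      · have he : (⟨((⟨(j : ℕ), h⟩ : Fin n) : ℕ), by omega⟩ : Fin (2 * n)) = j :=
          Fin.ext rfl
        rw [he]
      · have he : (⟨((⟨2 * n - 1 - (j : ℕ), by omega⟩ : Fin n) : ℕ), by omega⟩ :
            Fin (2 * n)) = j.rev := Fin.ext (by simp only [Fin.val_mk]; omega)
        rw [he, hf]
    · -- right inverse
      intro g
      funext a
      apply Subtype.ext
      funext i
      show (toRows h2m hn (mkF h2m hn g) (mkF_bal h2m hn g) a).1 i = (g a).1 i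
      simp only [toRows, mkF, dif_pos a.2]
  -- putting things together
  have hcard1 : Nat.card α % 2 = Nat.card (Function.fixedPoints σ) % 2 := by
    rw [Nat.card_eq_fintype_card, Nat.card_eq_fintype_card]
    exact hmod
  have hcard2 : Nat.card (Function.fixedPoints σ) = Nat.card Row ^ n := by
    rw [Nat.card_congr E, Nat.card_fun]
    congr 1
    rw [Nat.card_eq_fintype_card]
    simp
  have hrow : Odd (Nat.card Row) := odd_row (2 * m) k (by rw [hm]) ⟨0, h2m⟩ rfl
  have hodd : Odd (Nat.card Row ^ n) := hrow.pow
  rw [hBdd, Nat.odd_iff]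
  rw [Nat.odd_iff] at hodd
  omega
end
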